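/- arXiv:1603.04549 — 4 statements merged into one kernel-verified Lean document; each statement's English description precedes it below -/
import Mathlib

section
/- Let I and J be finite index sets, ρ : I → ℝ with ρ(i) > 0 for all i, and μ : J → ℝ with μ(j) > 0 for all j. Suppose the generalized imbalance condition holds: for every nonempty I' ⊆ I and every J' ⊆ J, ∑_{i∈I'} ρ(i) ≠ ∑_{j∈J'} μ(j). Consider a feasible routing matrix x : I × J → ℝ≥0 with ∑_{j∈J} x(i,j) = 1 for all i and ∑_{i∈I} ρ(i) x(i,j) ≤ μ(j) for all j. Form the bipartite graph on I ∪ J with an edge (i,j) whenever x(i,j) > 0. Then for any job type j₀ with ∑_{i∈I} ρ(i) x(i,j₀) = μ(j₀), the connected component of j₀ in this graph contains some job type j' with ∑_{i∈I} ρ(i) x(i,j') < μ(j'). -/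
open Finset

/-- Path lemma (Lemma A.3): under the generalized imbalance condition, for a
feasible routing matrix `x`, from any saturated job type `j₀` there is a path
in the bipartite support graph of `x` to an under-utilized job type. -/
theorem stmt_5 {I J : Type*} [Fintype I] [Fintype J]
    (ρ : I → ℝ) (μ : J → ℝ) (x : I → J → ℝ)
    (hρ : ∀ i, 0 < ρ i) (hμ : ∀ j, 0 < μ j)
    (himb : ∀ (I' : Finset I) (J' : Finset J), I'.Nonempty →
        ∑ i ∈ I', ρ i ≠ ∑ j ∈ J', μ j)
    (hx : ∀ i j, 0 ≤ x i j) (hrow : ∀ i, ∑ j, x i j = 1)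
    (hcap : ∀ j, ∑ i, ρ i * x i j ≤ μ j)
    (adj : (I ⊕ J) → (I ⊕ J) → Prop)
    (hadj : ∀ u v, adj u v ↔ ∃ i j, 0 < x i j ∧
        ((u = Sum.inl i ∧ v = Sum.inr j) ∨ (u = Sum.inr j ∧ v = Sum.inl i)))
    (j₀ : J) (hsat : ∑ i, ρ i * x i j₀ = μ j₀) :
    ∃ j' : J, Relation.ReflTransGen adj (Sum.inr j₀) (Sum.inr j') ∧
      ∑ i, ρ i * x i j' < μ j' := by
  classical
  by_contra hcon
  push_neg at hcon
  set R : (I ⊕ J) → Prop := Relation.ReflTransGen adj (Sum.inr j₀) with hR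
  set J' : Finset J := univ.filter (fun j => R (Sum.inr j)) with hJ'
  set I' : Finset I := univ.filter (fun i => R (Sum.inl i)) with hI'
  have hJ'mem : ∀ j, j ∈ J' ↔ R (Sum.inr j) := by intro j; simp [hJ']
  have hI'mem : ∀ i, i ∈ I' ↔ R (Sum.inl i) := by intro i; simp [hI']
  have step1 : ∀ i j, 0 < x i j → R (Sum.inl i) → R (Sum.inr j) := by
    intro i j hxij hi
    exact hi.tail ((hadj _ _).2 ⟨i, j, hxij, Or.inl ⟨rfl, rfl⟩⟩)
  have step2 : ∀ i j, 0 < x i j → R (Sum.inr j) → R (Sum.inl i) := by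
    intro i j hxij hj
    exact hj.tail ((hadj _ _).2 ⟨i, j, hxij, Or.inr ⟨rfl, rfl⟩⟩)
  have hj₀ : j₀ ∈ J' := (hJ'mem j₀).2 Relation.ReflTransGen.refl
  have hex : ∃ i, 0 < x i j₀ := by
    by_contra h
    push_neg at h
    have h0 : ∑ i, ρ i * x i j₀ = 0 := by
      apply Finset.sum_eq_zero
      intro i _
      have : x i j₀ = 0 := le_antisymm (h i) (hx i j₀)
      simp [this]
    linarith [hμ j₀, hsat]
  obtain ⟨i₀, hi₀⟩ := hex
  have hI'ne : I'.Nonempty := ⟨i₀, (hI'mem i₀).2 (step2 _ _ hi₀ ((hJ'mem j₀).1 hj₀))⟩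
  have hsatJ : ∀ j ∈ J', ∑ i, ρ i * x i j = μ j := fun j hj =>
    le_antisymm (hcap j) (hcon j ((hJ'mem j).1 hj))
  have hterm : ∀ i, ρ i * ∑ j ∈ J', x i j = if i ∈ I' then ρ i else 0 := by
    intro i
    by_cases hi : i ∈ I'
    · have h1 : ∑ j ∈ J', x i j = 1 := by
        rw [← hrow i]
        apply Finset.sum_subset (subset_univ _)
        intro j _ hj
        by_contra hne
        have hpos : 0 < x i j := (hx i j).lt_of_ne (Ne.symm hne)
        exact hj ((hJ'mem j).2 (step1 _ _ hpos ((hI'mem i).1 hi)))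
      simp [hi, h1]
    · have h0 : ∑ j ∈ J', x i j = 0 := Finset.sum_eq_zero (fun j hj => by
        by_contra hne
        have hpos : 0 < x i j := (hx i j).lt_of_ne (Ne.symm hne)
        exact hi ((hI'mem i).2 (step2 _ _ hpos ((hJ'mem j).1 hj))))
      simp [hi, h0]
  have key : ∑ j ∈ J', μ j = ∑ i ∈ I', ρ i := by
    calc ∑ j ∈ J', μ j = ∑ j ∈ J', ∑ i, ρ i * x i j :=
          Finset.sum_congr rfl (fun j hj => (hsatJ j hj).symm)
      _ = ∑ i, ∑ j ∈ J', ρ i * x i j := Finset.sum_comm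
      _ = ∑ i, ρ i * ∑ j ∈ J', x i j := by simp [Finset.mul_sum]
      _ = ∑ i, if i ∈ I' then ρ i else 0 := Finset.sum_congr rfl (fun i _ => hterm i)
      _ = ∑ i ∈ I', ρ i := by rw [hI']; rw [Finset.sum_filter]; simp [hI']
  exact himb I' J' hI'ne key.symm
end

section
/- Under the generalized imbalance condition, the set of capacity constraints that bind in the static planning LP cannot include all job types served: if the bipartite support graph of a feasible routing x has a connected component containing only saturated job types (i.e., every job type j in the component satisfies ∑_i ρ(i)x(i,j) = μ(j)), then summing the flow conservation over that component yields ∑_{i∈I'} ρ(i) = ∑_{j∈J'} μ(j) for the worker types I' and job types J' in the component, contradicting generalized imbalance. -/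
open Finset

/-- Under generalized imbalance, the bipartite support graph of a feasible
routing cannot have a (nonempty, edge-closed) component in which every job
type is saturated: summing flow conservation over such a component would give
`∑_{i∈I'} ρ(i) = ∑_{j∈J'} μ(j)`, contradicting generalized imbalance. -/
theorem stmt_6 {I J : Type*} [Fintype I] [Fintype J]
    (ρ : I → ℝ) (μ : J → ℝ) (x : I → J → ℝ)
    (hρ : ∀ i, 0 < ρ i) (hμ : ∀ j, 0 < μ j)
    (himb : ∀ (I' : Finset I) (J' : Finset J), I'.Nonempty →
        ∑ i ∈ I', ρ i ≠ ∑ j ∈ J', μ j)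
    (hx : ∀ i j, 0 ≤ x i j) (hrow : ∀ i, ∑ j, x i j = 1)
    (hcap : ∀ j, ∑ i, ρ i * x i j ≤ μ j)
    (I' : Finset I) (J' : Finset J)
    (hne : I'.Nonempty)
    (hclosedI : ∀ i ∈ I', ∀ j, 0 < x i j → j ∈ J')
    (hclosedJ : ∀ j ∈ J', ∀ i, 0 < x i j → i ∈ I')
    (hsat : ∀ j ∈ J', ∑ i, ρ i * x i j = μ j) :
    False := by
  classical
  apply himb I' J' hne
  have key : ∀ i, (if i ∈ I' then ρ i else 0) = ∑ j ∈ J', ρ i * x i j := by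
    intro i
    by_cases hi : i ∈ I'
    · simp only [hi, if_true]
      rw [← Finset.mul_sum]
      have : ∑ j ∈ J', x i j = 1 := by
        rw [← hrow i]
        apply Finset.sum_subset (Finset.subset_univ _)
        intro j _ hj
        by_contra h
        exact hj (hclosedI i hi j (lt_of_le_of_ne (hx i j) (Ne.symm h)))
      rw [this, mul_one]
    · simp only [hi, if_false]
      symm
      apply Finset.sum_eq_zero
      intro j hj
      have : x i j = 0 := by
        by_contra h
        exact hi (hclosedJ j hj i (lt_of_le_of_ne (hx i j) (Ne.symm h)))
      rw [this, mul_zero]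
  calc ∑ i ∈ I', ρ i = ∑ i, if i ∈ I' then ρ i else 0 := by
        rw [Finset.sum_ite_mem, Finset.univ_inter]
    _ = ∑ i, ∑ j ∈ J', ρ i * x i j := by simp_rw [key]
    _ = ∑ j ∈ J', ∑ i, ρ i * x i j := Finset.sum_comm
    _ = ∑ j ∈ J', μ j := Finset.sum_congr rfl hsat
end

section
/- Consider the linear program: maximize ∑_{i∈I} ρ(i) ∑_{j∈J} x(i,j) A(i,j) over row-stochastic matrices x ≥ 0 subject to ∑_{i∈I} ρ(i) x(i,j) ≤ μ(j) for all j ∈ J, where an empty job type κ ∈ J has A(i,κ) = 0 for all i and unbounded capacity. If the generalized imbalance condition holds for (ρ, μ), then the optimal dual variables (shadow prices) p*(j) for the capacity constraints are uniquely determined. -/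
open Finset

/-- Dual feasibility for the static planning LP: prices `p ≥ 0` on job types
(with `p κ = 0` for the uncapacitated empty job type `κ`) and worker values
`v ≥ 0` with `p j + v i ≥ A i j`. -/
def DualFeasible {I J : Type*} [Fintype I] [Fintype J]
    (A : I → J → ℝ) (κ : J) (p : J → ℝ) (v : I → ℝ) : Prop :=
  p κ = 0 ∧ (∀ j, 0 ≤ p j) ∧ (∀ i, 0 ≤ v i) ∧ ∀ i j, A i j ≤ p j + v i

/-- Dual objective `∑_{j ≠ κ} μ(j) p(j) + ∑_i ρ(i) v(i)`. -/
def DualObjective {I J : Type*} [Fintype I] [Fintype J] [DecidableEq J]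
    (ρ : I → ℝ) (μ : J → ℝ) (κ : J) (p : J → ℝ) (v : I → ℝ) : ℝ :=
  ∑ j ∈ Finset.univ.erase κ, μ j * p j + ∑ i, ρ i * v i

/-- Dual optimality. -/
def DualOptimal {I J : Type*} [Fintype I] [Fintype J] [DecidableEq J]
    (ρ : I → ℝ) (μ : J → ℝ) (A : I → J → ℝ) (κ : J) (p : J → ℝ) (v : I → ℝ) : Prop :=
  DualFeasible A κ p v ∧
    ∀ p' v', DualFeasible A κ p' v' →
      DualObjective ρ μ κ p v ≤ DualObjective ρ μ κ p' v'

open scoped Classical in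
/-- Key one-sided lemma: any two dual optimal price vectors satisfy `p₂ ≤ p₁`. -/
theorem stmt_7_aux {I J : Type*} [Fintype I] [Fintype J] [DecidableEq J]
    (ρ : I → ℝ) (μ : J → ℝ) (A : I → J → ℝ) (κ : J)
    (hρ : ∀ i, 0 < ρ i) (hμ : ∀ j, j ≠ κ → 0 < μ j)
    (hAκ : ∀ i, A i κ = 0)
    (himb : ∀ (I' : Finset I) (J' : Finset J), I'.Nonempty → κ ∉ J' →
        ∑ i ∈ I', ρ i ≠ ∑ j ∈ J', μ j)
    (p₁ p₂ : J → ℝ) (v₁ v₂ : I → ℝ)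
    (h₁ : DualOptimal ρ μ A κ p₁ v₁) (h₂ : DualOptimal ρ μ A κ p₂ v₂) :
    ∀ j, p₂ j ≤ p₁ j := by
  by_contra hcon
  push_neg at hcon
  obtain ⟨jbad, hjbad⟩ := hcon
  obtain ⟨⟨hp₁κ, hp₁0, hv₁0, hf₁⟩, hopt₁⟩ := h₁
  obtain ⟨⟨hp₂κ, hp₂0, hv₂0, hf₂⟩, hopt₂⟩ := h₂
  set d : J → ℝ := fun j => p₂ j - p₁ j with hd
  clear_value d
  obtain ⟨j₀, -, hj₀⟩ := Finset.exists_max_image (univ : Finset J) d ⟨κ, mem_univ κ⟩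
  set δ := d j₀ with hδdef
  clear_value δ
  have hδ : 0 < δ := by
    have h1 : 0 < d jbad := by simp only [hd]; linarith
    exact lt_of_lt_of_le h1 (hj₀ jbad (mem_univ _))
  -- midpoint
  set p : J → ℝ := fun j => (p₁ j + p₂ j) / 2 with hp
  set vb : I → ℝ := fun i => (v₁ i + v₂ i) / 2 with hvb
  clear_value p
  clear_value vb
  have hpκ : p κ = 0 := by simp [hp, hp₁κ, hp₂κ]
  have hp0 : ∀ j, 0 ≤ p j := fun j => by
    have := hp₁0 j; have := hp₂0 j; simp only [hp]; linarith
  have hvb0 : ∀ i, 0 ≤ vb i := fun i => by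
    have := hv₁0 i; have := hv₂0 i; simp only [hvb]; linarith
  have hfmid : ∀ i j, A i j ≤ p j + vb i := fun i j => by
    have := hf₁ i j; have := hf₂ i j; simp only [hp, hvb]; linarith
  have hfeasmid : DualFeasible A κ p vb := ⟨hpκ, hp0, hvb0, hfmid⟩
  -- split of midpoint objective
  have e1 : ∑ j ∈ univ.erase κ, μ j * p j
      = (∑ j ∈ univ.erase κ, μ j * p₁ j + ∑ j ∈ univ.erase κ, μ j * p₂ j) / 2 := by
    rw [← Finset.sum_add_distrib, Finset.sum_div]
    exact Finset.sum_congr rfl fun j _ => by simp only [hp]; ring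
  have e2 : ∑ i, ρ i * vb i = (∑ i, ρ i * v₁ i + ∑ i, ρ i * v₂ i) / 2 := by
    rw [← Finset.sum_add_distrib, Finset.sum_div]
    exact Finset.sum_congr rfl fun i _ => by simp only [hvb]; ring
  have hsplit : DualObjective ρ μ κ p vb
      = (DualObjective ρ μ κ p₁ v₁ + DualObjective ρ μ κ p₂ v₂) / 2 := by
    simp only [DualObjective]; rw [e1, e2]; ring
  have hoptmid : ∀ p' v', DualFeasible A κ p' v' →
      DualObjective ρ μ κ p vb ≤ DualObjective ρ μ κ p' v' := by
    intro p' v' h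
    have a1 := hopt₁ p' v' h
    have a2 := hopt₂ p' v' h
    rw [hsplit]; linarith
  -- the pointwise sup equals vb
  have hJne : (univ : Finset J).Nonempty := ⟨κ, mem_univ κ⟩
  set w : I → ℝ := fun i => univ.sup' hJne (fun j => A i j - p j) with hw
  clear_value w
  have hwle : ∀ i j, A i j - p j ≤ w i := by
    intro i j
    simp only [hw]
    exact Finset.le_sup' (fun j => A i j - p j) (mem_univ j)
  have hw0 : ∀ i, 0 ≤ w i := fun i => by
    have := hwle i κ; rw [hAκ i, hpκ] at this; linarith
  have hwvb : ∀ i, w i ≤ vb i := by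
    intro i
    simp only [hw]
    exact Finset.sup'_le _ _ fun j _ => by have := hfmid i j; linarith
  have hfeasw : DualFeasible A κ p w :=
    ⟨hpκ, hp0, hw0, fun i j => by have := hwle i j; linarith⟩
  have hterm : ∀ i ∈ (univ : Finset I), ρ i * w i ≤ ρ i * vb i := fun i _ =>
    mul_le_mul_of_nonneg_left (hwvb i) (hρ i).le
  have hsum_eq : ∑ i, ρ i * w i = ∑ i, ρ i * vb i := by
    have hle := Finset.sum_le_sum hterm
    have hge := hoptmid p w hfeasw
    simp only [DualObjective] at hge
    linarith
  have hveq : ∀ i, w i = vb i := fun i =>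
    mul_left_cancel₀ (hρ i).ne'
      ((Finset.sum_eq_sum_iff_of_le hterm).mp hsum_eq i (mem_univ i))
  have htight : ∀ i j, A i j - p j = vb i →
      A i j - p₁ j = v₁ i ∧ A i j - p₂ j = v₂ i := by
    intro i j h
    have h1 := hf₁ i j
    have h2 := hf₂ i j
    simp only [hp, hvb] at h
    constructor <;> linarith
  have hdc : ∀ i j, A i j - p j = vb i → d j = v₁ i - v₂ i := by
    intro i j h
    obtain ⟨q1, q2⟩ := htight i j h
    simp only [hd]; linarith
  have hattain : ∀ i, ∃ j, A i j - p j = vb i := by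
    intro i
    obtain ⟨j, -, hj⟩ := Finset.exists_mem_eq_sup' hJne (fun j => A i j - p j)
    refine ⟨j, ?_⟩
    rw [← hj, ← hveq i, hw]
  have hcle : ∀ i, v₁ i - v₂ i ≤ δ := by
    intro i
    obtain ⟨j, hj⟩ := hattain i
    rw [← hdc i j hj]
    exact hj₀ j (mem_univ j)
  -- the maximizing sets
  set J' : Finset J := univ.filter (fun j => d j = δ) with hJ'
  set I' : Finset I := univ.filter (fun i => v₁ i - v₂ i = δ) with hI'
  clear_value J'
  clear_value I'
  have hdκ : d κ = 0 := by simp [hd, hp₁κ, hp₂κ]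
  have hκJ' : κ ∉ J' := by
    simp only [hJ', Finset.mem_filter]
    rintro ⟨-, h⟩
    rw [hdκ] at h; linarith
  have hj₀J' : j₀ ∈ J' := by
    rw [hJ', Finset.mem_filter]
    exact ⟨mem_univ _, hδdef.symm⟩
  have hJ'sub : J' ⊆ univ.erase κ := fun j hj =>
    mem_erase.mpr ⟨fun h => hκJ' (h ▸ hj), mem_univ j⟩
  have strict1 : ∀ i ∈ I', ∀ j, j ∉ J' → A i j < p j + vb i := by
    intro i hi j hj
    rcases (hfmid i j).lt_or_eq with h | h
    · exact h
    · exfalso; apply hj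
      simp only [hI', Finset.mem_filter] at hi
      simp only [hJ', Finset.mem_filter]
      exact ⟨mem_univ j, by rw [hdc i j (by linarith)]; exact hi.2⟩
  have strict2 : ∀ j ∈ J', ∀ i, i ∉ I' → A i j < p j + vb i := by
    intro j hj i hi
    rcases (hfmid i j).lt_or_eq with h | h
    · exact h
    · exfalso; apply hi
      simp only [hJ', Finset.mem_filter] at hj
      simp only [hI', Finset.mem_filter]
      refine ⟨mem_univ i, ?_⟩
      rw [← hdc i j (by linarith)]
      exact hj.2
  -- choice of ε
  set T : Finset ℝ := insert (δ / 2) ((univ : Finset (I × J)).image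
      (fun q => if A q.1 q.2 < p q.2 + vb q.1 then p q.2 + vb q.1 - A q.1 q.2 else δ / 2))
    with hT
  have hTne : T.Nonempty := ⟨δ / 2, by rw [hT]; exact Finset.mem_insert_self _ _⟩
  clear_value T
  set ε : ℝ := T.min' hTne with hε
  have hTpos : ∀ x ∈ T, 0 < x := by
    intro x hx
    rw [hT] at hx
    rcases Finset.mem_insert.mp hx with rfl | hx
    · linarith
    · obtain ⟨q, -, rfl⟩ := Finset.mem_image.mp hx
      split_ifs with h
      · linarith
      · linarith
  have hε0 : 0 < ε := hTpos _ (hε ▸ Finset.min'_mem _ _)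
  have hεδ : ε ≤ δ / 2 := by
    rw [hε]
    exact Finset.min'_le _ _ (by rw [hT]; exact Finset.mem_insert_self _ _)
  have hεgap : ∀ i j, A i j < p j + vb i → A i j ≤ p j + vb i - ε := by
    intro i j h
    have hmem : (p j + vb i - A i j) ∈ T := by
      rw [hT]
      apply Finset.mem_insert_of_mem
      refine Finset.mem_image.mpr ⟨(i, j), mem_univ _, ?_⟩
      simp only [if_pos h]
    have := Finset.min'_le _ _ hmem
    rw [← hε] at this
    linarith
  have hvbI' : ∀ i ∈ I', δ / 2 ≤ vb i := by
    intro i hi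
    simp only [hI', Finset.mem_filter] at hi
    have := hv₂0 i
    simp only [hvb]; linarith [hi.2]
  have hpJ' : ∀ j ∈ J', δ / 2 ≤ p j := by
    intro j hj
    simp only [hJ', Finset.mem_filter, hd] at hj
    have := hp₁0 j
    simp only [hp]; linarith [hj.2]
  -- perturbation upward
  set pp : J → ℝ := fun j => p j + (if j ∈ J' then ε else 0) with hpp
  clear_value pp
  set vv : I → ℝ := fun i => vb i - (if i ∈ I' then ε else 0) with hvv
  clear_value vv
  have hfeaspp : DualFeasible A κ pp vv := by
    refine ⟨?_, ?_, ?_, ?_⟩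
    · simp [hpp, if_neg hκJ', hpκ]
    · intro j; simp only [hpp]
      have := hp0 j
      split_ifs <;> linarith
    · intro i; simp only [hvv]
      by_cases hi : i ∈ I'
      · rw [if_pos hi]; have := hvbI' i hi; linarith
      · rw [if_neg hi]; have := hvb0 i; linarith
    · intro i j
      simp only [hpp, hvv]
      by_cases hi : i ∈ I' <;> by_cases hj : j ∈ J' <;>
        simp only [if_pos, if_neg, hi, hj, if_true, if_false]
      · have := hfmid i j; linarith
      · have := hεgap i j (strict1 i hi j hj); linarith
      · have := hfmid i j; linarith
      · have := hfmid i j; linarith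
  have epp : ∑ j ∈ univ.erase κ, μ j * pp j
      = ∑ j ∈ univ.erase κ, μ j * p j + ∑ j ∈ J', μ j * ε := by
    have step : ∀ j ∈ univ.erase κ,
        μ j * pp j = μ j * p j + (if j ∈ J' then μ j * ε else 0) := by
      intro j _; simp only [hpp]; split_ifs <;> ring
    rw [Finset.sum_congr rfl step, Finset.sum_add_distrib]
    congr 1
    rw [Finset.sum_ite_mem, Finset.inter_eq_right.mpr hJ'sub]
  have evv : ∑ i, ρ i * vv i = ∑ i, ρ i * vb i - ∑ i ∈ I', ρ i * ε := by
    have step : ∀ i ∈ (univ : Finset I),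
        ρ i * vv i = ρ i * vb i - (if i ∈ I' then ρ i * ε else 0) := by
      intro i _; simp only [hvv]; split_ifs <;> ring
    rw [Finset.sum_congr rfl step, Finset.sum_sub_distrib]
    congr 1
    rw [Finset.sum_ite_mem, Finset.univ_inter]
  have ineq1 : ∑ i ∈ I', ρ i * ε ≤ ∑ j ∈ J', μ j * ε := by
    have := hoptmid pp vv hfeaspp
    simp only [DualObjective] at this
    rw [epp, evv] at this
    linarith
  -- perturbation downward
  set pm : J → ℝ := fun j => p j - (if j ∈ J' then ε else 0) with hpm
  clear_value pm
  set vm : I → ℝ := fun i => vb i + (if i ∈ I' then ε else 0) with hvm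
  clear_value vm
  have hfeaspm : DualFeasible A κ pm vm := by
    refine ⟨?_, ?_, ?_, ?_⟩
    · simp [hpm, if_neg hκJ', hpκ]
    · intro j; simp only [hpm]
      by_cases hj : j ∈ J'
      · rw [if_pos hj]; have := hpJ' j hj; linarith
      · rw [if_neg hj]; have := hp0 j; linarith
    · intro i; simp only [hvm]
      have := hvb0 i
      split_ifs <;> linarith
    · intro i j
      simp only [hpm, hvm]
      by_cases hi : i ∈ I' <;> by_cases hj : j ∈ J' <;>
        simp only [if_pos, if_neg, hi, hj, if_true, if_false]
      · have := hfmid i j; linarith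
      · have := hfmid i j; linarith
      · have := hεgap i j (strict2 j hj i hi); linarith
      · have := hfmid i j; linarith
  have epm : ∑ j ∈ univ.erase κ, μ j * pm j
      = ∑ j ∈ univ.erase κ, μ j * p j - ∑ j ∈ J', μ j * ε := by
    have step : ∀ j ∈ univ.erase κ,
        μ j * pm j = μ j * p j - (if j ∈ J' then μ j * ε else 0) := by
      intro j _; simp only [hpm]; split_ifs <;> ring
    rw [Finset.sum_congr rfl step, Finset.sum_sub_distrib]
    congr 1
    rw [Finset.sum_ite_mem, Finset.inter_eq_right.mpr hJ'sub]
  have evm : ∑ i, ρ i * vm i = ∑ i, ρ i * vb i + ∑ i ∈ I', ρ i * ε := by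
    have step : ∀ i ∈ (univ : Finset I),
        ρ i * vm i = ρ i * vb i + (if i ∈ I' then ρ i * ε else 0) := by
      intro i _; simp only [hvm]; split_ifs <;> ring
    rw [Finset.sum_congr rfl step, Finset.sum_add_distrib]
    congr 1
    rw [Finset.sum_ite_mem, Finset.univ_inter]
  have ineq2 : ∑ j ∈ J', μ j * ε ≤ ∑ i ∈ I', ρ i * ε := by
    have := hoptmid pm vm hfeaspm
    simp only [DualObjective] at this
    rw [epm, evm] at this
    linarith
  -- conclude
  have heqε : (∑ i ∈ I', ρ i) * ε = (∑ j ∈ J', μ j) * ε := by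
    rw [Finset.sum_mul, Finset.sum_mul]
    exact le_antisymm ineq1 ineq2
  have hsum' : ∑ i ∈ I', ρ i = ∑ j ∈ J', μ j := mul_right_cancel₀ hε0.ne' heqε
  have hJ'pos : 0 < ∑ j ∈ J', μ j :=
    Finset.sum_pos (fun j hj => hμ j (mem_erase.mp (hJ'sub hj)).1) ⟨j₀, hj₀J'⟩
  have hI'ne : I'.Nonempty := by
    rcases I'.eq_empty_or_nonempty with h | h
    · rw [h] at hsum'; simp at hsum'; linarith
    · exact h
  exact himb I' J' hI'ne hκJ' hsum'

/-- Under the generalized imbalance condition, the optimal shadow prices for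
the capacity constraints of the static planning LP are uniquely determined. -/
theorem stmt_7 {I J : Type*} [Fintype I] [Fintype J] [DecidableEq J]
    (ρ : I → ℝ) (μ : J → ℝ) (A : I → J → ℝ) (κ : J)
    (hρ : ∀ i, 0 < ρ i) (hμ : ∀ j, j ≠ κ → 0 < μ j)
    (hAκ : ∀ i, A i κ = 0)
    (himb : ∀ (I' : Finset I) (J' : Finset J), I'.Nonempty → κ ∉ J' →
        ∑ i ∈ I', ρ i ≠ ∑ j ∈ J', μ j)
    (p₁ p₂ : J → ℝ) (v₁ v₂ : I → ℝ)
    (h₁ : DualOptimal ρ μ A κ p₁ v₁) (h₂ : DualOptimal ρ μ A κ p₂ v₂) :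
    p₁ = p₂ := by
  funext j
  exact le_antisymm
    (stmt_7_aux ρ μ A κ hρ hμ hAκ himb p₂ p₁ v₂ v₁ h₂ h₁ j)
    (stmt_7_aux ρ μ A κ hρ hμ hAκ himb p₁ p₂ v₁ v₂ h₁ h₂ j)
end

section
/- In the static planning LP with known worker types, suppose the generalized imbalance condition holds and at least one capacity constraint binds in an optimal solution x*. Then there exists a worker type i such that the row x*(i,·) has support on at least two job types, i.e., 0 < x*(i,j) < 1 for some j. -/
open Finset

/-- Primal feasibility for the static planning LP: a row-stochastic routing
matrix that respects the capacity of every job type other than the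
uncapacitated empty type `κ`. -/
def PrimalFeasible {I J : Type*} [Fintype I] [Fintype J]
    (ρ : I → ℝ) (μ : J → ℝ) (κ : J) (x : I → J → ℝ) : Prop :=
  (∀ i j, 0 ≤ x i j) ∧ (∀ i, ∑ j, x i j = 1) ∧
    ∀ j, j ≠ κ → ∑ i, ρ i * x i j ≤ μ j

/-- Primal objective: the steady-state rate of payoff accumulation. -/
def PrimalObjective {I J : Type*} [Fintype I] [Fintype J]
    (ρ : I → ℝ) (A : I → J → ℝ) (x : I → J → ℝ) : ℝ :=
  ∑ i, ρ i * ∑ j, x i j * A i j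

/-- Fact 4.1: under generalized imbalance, if some capacity constraint binds at
an optimal solution `x*`, then some worker type's row of `x*` is supported on
multiple job types, i.e. some entry lies strictly between 0 and 1. -/
theorem stmt_8 {I J : Type*} [Fintype I] [Fintype J]
    (ρ : I → ℝ) (μ : J → ℝ) (A : I → J → ℝ) (κ : J)
    (hρ : ∀ i, 0 < ρ i) (hμ : ∀ j, j ≠ κ → 0 < μ j)
    (hAκ : ∀ i, A i κ = 0)
    (himb : ∀ (I' : Finset I) (J' : Finset J), I'.Nonempty → κ ∉ J' →
        ∑ i ∈ I', ρ i ≠ ∑ j ∈ J', μ j)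
    (xstar : I → J → ℝ)
    (hfeas : PrimalFeasible ρ μ κ xstar)
    (hopt : ∀ y, PrimalFeasible ρ μ κ y →
        PrimalObjective ρ A y ≤ PrimalObjective ρ A xstar)
    (hbind : ∃ j, j ≠ κ ∧ ∑ i, ρ i * xstar i j = μ j) :
    ∃ i j, 0 < xstar i j ∧ xstar i j < 1 := by
  by_contra hcon
  push_neg at hcon
  obtain ⟨hnn, hrow, hcap⟩ := hfeas
  -- every entry is 0 or 1
  have h01 : ∀ i j, xstar i j = 0 ∨ xstar i j = 1 := by
    intro i j
    rcases lt_or_eq_of_le (hnn i j) with hpos | heq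
    · right
      have hge : 1 ≤ xstar i j := hcon i j hpos
      have hle : xstar i j ≤ 1 := by
        calc xstar i j ≤ ∑ j', xstar i j' :=
              Finset.single_le_sum (fun j' _ => hnn i j') (mem_univ j)
          _ = 1 := hrow i
      linarith
    · left; exact heq.symm
  obtain ⟨j, hjκ, hb⟩ := hbind
  set S : Finset I := univ.filter (fun i => xstar i j = 1) with hS
  have hsum : ∑ i ∈ S, ρ i = ∑ i, ρ i * xstar i j := by
    rw [← Finset.sum_filter_add_sum_filter_not univ (fun i => xstar i j = 1)
      (fun i => ρ i * xstar i j)]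
    have h1 : ∑ i ∈ univ.filter (fun i => xstar i j = 1), ρ i * xstar i j
        = ∑ i ∈ S, ρ i := by
      apply Finset.sum_congr rfl
      intro i hi
      rw [(Finset.mem_filter.mp hi).2, mul_one]
    have h2 : ∑ i ∈ univ.filter (fun i => ¬ xstar i j = 1), ρ i * xstar i j = 0 := by
      apply Finset.sum_eq_zero
      intro i hi
      rcases h01 i j with h | h
      · rw [h, mul_zero]
      · exact absurd h (Finset.mem_filter.mp hi).2
    rw [h1, h2, add_zero]
  have hμj : 0 < μ j := hμ j hjκ
  have hSne : S.Nonempty := by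
    by_contra hne
    rw [Finset.not_nonempty_iff_eq_empty] at hne
    rw [hne, Finset.sum_empty] at hsum
    rw [hb] at hsum
    linarith
  have := himb S {j} hSne (by simp [Ne.symm hjκ])
  rw [hsum, hb, Finset.sum_singleton] at this
  exact this rfl
end
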